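/- Let k be a field with a primitive l-th root of unity, char(k) ∤ l, and let μ_l act on A = k[z,w]/(zw-t) (t ∈ k) by (z,w) ↦ (ζz, ζ^{-1}w). Then the invariant subring A^{μ_l} is generated as a k-algebra by x = z^l and y = w^l, and satisfies the relation xy = t^l; i.e., A^{μ_l} ≅ k[x,y]/(xy - t^l). -/

import Mathlib

/-!
Since `l` is invertible in `k`, averaging over `μ_l` is a projection onto the invariants.
Summing over `μ_l` multiplies `z^a w^b` by `∑ᵢ ζ^(i(a-b))`, which vanishes unless `a ≡ b mod l`;
the surviving monomials are `(z^l)^i (w^l)^j (zw)^m` with `zw = t`, so the invariants are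
`k[z^l, w^l]`.

For the presentation, `x ↦ z^l, y ↦ w^l` kills `xy - t^l`. Modulo `xy - t^l` every polynomial
is congruent to one without mixed monomials `x^a y^b` (`a, b ≥ 1`); substituting `z^l, w^l`
keeps it free of mixed monomials, and a multiple `(zw - t) h` has no mixed monomials only if
`h = 0`, because its coefficients satisfy `h_d = t h_(d + (1,1))`.
-/

open MvPolynomial

/-- The `μ_l`-action on representatives: the `k`-algebra endomorphism of `k[z,w]`
sending `z ↦ ξ z`, `w ↦ ξ⁻¹ w`. -/
noncomputable def stmt3.σ {k : Type*} [Field k] (ξ : k) :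
    MvPolynomial (Fin 2) k →ₐ[k] MvPolynomial (Fin 2) k :=
  aeval ![ξ • X 0, ξ⁻¹ • X 1]

namespace MvPolynomial

theorem expand_mem_restrictSupport {σ R : Type*} [CommSemiring R] {n : ℕ}
    {s : Set (σ →₀ ℕ)} (hs : ∀ d ∈ s, n • d ∈ s) {p : MvPolynomial σ R}
    (hp : p ∈ restrictSupport R s) : expand n p ∈ restrictSupport R s := by
  rw [restrictSupport_eq_span] at hp ⊢
  refine (Submodule.map_span_le (expand n).toLinearMap _ _ |>.mpr ?_)
    (Submodule.mem_map_of_mem hp)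
  rintro _ ⟨d, hd, rfl⟩
  simpa using Submodule.subset_span (Set.mem_image_of_mem (monomial · (1 : R)) (hs d hd))

end MvPolynomial

theorem Nat.dvd_sub_min_of_modEq {a b n : ℕ} (h : a ≡ b [MOD n]) : n ∣ a - min a b := by
  refine Nat.dvd_of_mod_eq_zero (Nat.sub_mod_eq_zero_of_mod_eq ?_)
  rcases min_choice a b with hm | hm <;> rw [hm]
  exact h

namespace NodeQuotient

variable {k : Type*} [Field k]

noncomputable abbrev nodeIdeal (t : k) : Ideal (MvPolynomial (Fin 2) k) :=
  Ideal.span {X 0 * X 1 - C t}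

def unmixed : Set (Fin 2 →₀ ℕ) := {d | d 0 = 0 ∨ d 1 = 0}

def balanced (l : ℕ) : Set (Fin 2 →₀ ℕ) := {d | d 0 ≡ d 1 [MOD l]}

theorem eq_zero_of_mem_nodeIdeal_of_mem_restrictSupport_unmixed {t : k}
    {p : MvPolynomial (Fin 2) k} (hI : p ∈ nodeIdeal t) (hp : p ∈ restrictSupport k unmixed) :
    p = 0 := by
  obtain ⟨h, rfl⟩ := Ideal.mem_span_singleton.mp hI
  set e : Fin 2 →₀ ℕ := Finsupp.single 0 1 + Finsupp.single 1 1
  have hX : (X 0 * X 1 : MvPolynomial (Fin 2) k) = monomial e 1 := by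
    simp [e, X, monomial_mul]
  have step (d : Fin 2 →₀ ℕ) : coeff d h = t * coeff (e + d) h := by
    have hmixed : e + d ∉ unmixed := by simp [unmixed, e]
    have h0 : coeff (e + d) ((X 0 * X 1 - C t) * h) = 0 :=
      notMem_support_iff.mp fun hd => hmixed ((mem_restrictSupport_iff k).mp hp hd)
    rwa [hX, sub_mul, coeff_sub, coeff_monomial_mul, coeff_C_mul, one_mul, sub_eq_zero] at h0
  have iterate (n : ℕ) (d : Fin 2 →₀ ℕ) : coeff d h = t ^ n * coeff (n • e + d) h := by
    induction n generalizing d with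
    | zero => simp
    | succ n ih => rw [ih, step, ← add_assoc, ← succ_nsmul', pow_succ, mul_assoc]
  have hh : h = 0 := by
    ext d
    rw [iterate (degreeOf 0 h + 1) d, coeff_zero]
    refine mul_eq_zero_of_right _ (notMem_support_iff.mp fun hd => ?_)
    have := monomial_le_degreeOf 0 hd
    simp [e] at this
    omega
  rw [hh, mul_zero]

theorem exists_mem_restrictSupport_unmixed_sub_mem_nodeIdeal (s : k)
    (q : MvPolynomial (Fin 2) k) : ∃ r ∈ restrictSupport k unmixed, q - r ∈ nodeIdeal s := by
  induction q using induction_on' with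
  | monomial d c =>
    set m := min (d 0) (d 1)
    set d' : Fin 2 →₀ ℕ := Finsupp.single 0 (d 0 - m) + Finsupp.single 1 (d 1 - m)
    have hd : monomial d c = monomial d' c * (X 0 * X 1) ^ m := by
      rw [X, X, monomial_mul, monomial_pow, monomial_mul, mul_one, one_pow, mul_one]
      congr 2
      ext i
      fin_cases i <;> simp [d'] <;> omega
    refine ⟨monomial d' (c * s ^ m), ?_, ?_⟩
    · rw [monomial_mem_restrictSupport]
      left
      simp [unmixed, d']
      omega
    · have hfactor : monomial d c - monomial d' (c * s ^ m)
          = monomial d' c * ((X 0 * X 1) ^ m - C s ^ m) := by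
        rw [mul_sub, ← hd, ← C_pow, mul_comm _ (C _), C_mul_monomial, mul_comm (s ^ m)]
      rw [hfactor]
      exact Ideal.mul_mem_left _ _ (Ideal.mem_span_singleton.mpr (sub_dvd_pow_sub_pow _ _ _))
  | add p q hp hq =>
    obtain ⟨r₁, hr₁, hp⟩ := hp
    obtain ⟨r₂, hr₂, hq⟩ := hq
    refine ⟨r₁ + r₂, add_mem hr₁ hr₂, ?_⟩
    convert add_mem hp hq using 1
    ring

noncomputable def powersSubalgebra (t : k) (l : ℕ) :
    Subalgebra k (MvPolynomial (Fin 2) k ⧸ nodeIdeal t) :=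
  Algebra.adjoin k {Ideal.Quotient.mk _ (X 0 ^ l), Ideal.Quotient.mk _ (X 1 ^ l)}

theorem σ_monomial (ξ : k) (d : Fin 2 →₀ ℕ) (c : k) :
    stmt3.σ ξ (monomial d c) = (ξ ^ d 0 * ξ⁻¹ ^ d 1) • monomial d c := by
  rw [stmt3.σ, aeval_monomial, Finsupp.prod_fintype _ _ (by simp), Fin.prod_univ_two,
    monomial_eq, Finsupp.prod_fintype _ _ (by simp), Fin.prod_univ_two]
  simp only [Matrix.cons_val_zero, Matrix.cons_val_one, algebraMap_eq, smul_eq_C_mul, C_mul,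
    C_pow]
  ring

theorem nodeIdeal_le_comap_σ (t : k) {ξ : k} (hξ : ξ ≠ 0) :
    nodeIdeal t ≤ (nodeIdeal t).comap (stmt3.σ ξ) := by
  rw [Ideal.span_le, Set.singleton_subset_iff, SetLike.mem_coe, Ideal.mem_comap]
  have hrel : stmt3.σ ξ (X 0 * X 1 - C t) = X 0 * X 1 - C t := by
    simp only [stmt3.σ, map_sub, map_mul, aeval_X, aeval_C, Matrix.cons_val_zero,
      Matrix.cons_val_one, smul_mul_smul, mul_inv_cancel₀ hξ, one_smul, algebraMap_eq]
  rw [hrel]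
  exact Ideal.subset_span rfl

theorem mk_σ_eq_self_of_mem_powersSubalgebra (t : k) {l : ℕ} (hl : 0 < l) {ξ : k}
    (hξ : ξ ^ l = 1) {p : MvPolynomial (Fin 2) k}
    (hp : Ideal.Quotient.mk _ p ∈ powersSubalgebra t l) :
    Ideal.Quotient.mk (nodeIdeal t) (stmt3.σ ξ p) = Ideal.Quotient.mk _ p := by
  have hξ0 : ξ ≠ 0 := by
    rintro rfl
    simp [zero_pow hl.ne'] at hξ
  let σbar := Ideal.quotientMapₐ (nodeIdeal t) (stmt3.σ ξ) (nodeIdeal_le_comap_σ t hξ0)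
  have hfix : powersSubalgebra t l ≤ AlgHom.equalizer σbar (AlgHom.id k _) := by
    refine AlgHom.adjoin_le_equalizer _ _ ?_
    rintro _ (rfl | rfl) <;> simp [σbar, stmt3.σ, smul_pow, inv_pow, hξ]
  exact hfix hp

theorem sum_σ_pow_mem_restrictSupport_balanced {l : ℕ} (hl : 0 < l) {ζ : k}
    (hζ : IsPrimitiveRoot ζ l) (p : MvPolynomial (Fin 2) k) :
    ∑ i ∈ Finset.range l, stmt3.σ (ζ ^ i) p ∈ restrictSupport k (balanced l) := by
  induction p using induction_on' with
  | monomial d c =>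
    simp only [σ_monomial]
    by_cases hd : d ∈ balanced l
    · exact Submodule.sum_mem _ fun i _ =>
        Submodule.smul_mem _ _ ((monomial_mem_restrictSupport k).mpr (Or.inl hd))
    · obtain ⟨η, hη_def⟩ : ∃ η, η = ζ ^ d 0 * ζ⁻¹ ^ d 1 := ⟨_, rfl⟩
      have hpow (i : ℕ) : (ζ ^ i) ^ d 0 * (ζ ^ i)⁻¹ ^ d 1 = η ^ i := by rw [hη_def]; ring
      have hη : η ^ l = 1 := by
        rw [← hpow, hζ.pow_eq_one, inv_one, one_pow, one_pow, one_mul]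
      have hη1 : η ≠ 1 := by
        intro h
        rw [hη_def, inv_pow, mul_inv_eq_one₀ (pow_ne_zero _ (hζ.ne_zero hl.ne')),
          (hζ.isOfFinOrder hl.ne').pow_eq_pow_iff_modEq, ← hζ.eq_orderOf] at h
        exact hd h
      simp only [hpow, ← Finset.sum_smul, geom_sum_eq hη1, hη, sub_self, zero_div, zero_smul]
      exact zero_mem _
  | add p q hp hq =>
    simp only [map_add, Finset.sum_add_distrib]
    exact add_mem hp hq

theorem mk_monomial_mem_powersSubalgebra (t : k) {l : ℕ} {d : Fin 2 →₀ ℕ}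
    (hd : d ∈ balanced l) :
    Ideal.Quotient.mk (nodeIdeal t) (monomial d 1) ∈ powersSubalgebra t l := by
  set m := min (d 0) (d 1)
  obtain ⟨a, ha⟩ := Nat.dvd_sub_min_of_modEq hd
  obtain ⟨b, hb⟩ := min_comm (d 1) (d 0) ▸ Nat.dvd_sub_min_of_modEq hd.symm
  have hmono : (monomial d 1 : MvPolynomial (Fin 2) k)
      = (X 0 ^ l) ^ a * (X 1 ^ l) ^ b * (X 0 * X 1) ^ m := by
    rw [monomial_eq, Finsupp.prod_fintype _ _ (by simp), Fin.prod_univ_two, C_1, one_mul,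
      show d 0 = l * a + m by omega, show d 1 = l * b + m by omega]
    ring
  have hrel : Ideal.Quotient.mk (nodeIdeal t) (X 0 * X 1) = algebraMap k _ t := by
    rw [← Ideal.Quotient.mk_algebraMap, algebraMap_eq, Ideal.Quotient.mk_eq_mk_iff_sub_mem]
    exact Ideal.subset_span rfl
  have hx : Ideal.Quotient.mk (nodeIdeal t) (X 0 ^ l) ∈ powersSubalgebra t l :=
    Algebra.subset_adjoin (Set.mem_insert _ _)
  have hy : Ideal.Quotient.mk (nodeIdeal t) (X 1 ^ l) ∈ powersSubalgebra t l :=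
    Algebra.subset_adjoin (Set.mem_insert_of_mem _ rfl)
  rw [hmono, map_mul, map_mul, map_pow _ (X 0 ^ l), map_pow _ (X 1 ^ l), map_pow _ (X 0 * X 1),
    hrel]
  exact mul_mem (mul_mem (pow_mem hx a) (pow_mem hy b))
    (pow_mem (Subalgebra.algebraMap_mem _ t) m)

theorem mk_mem_powersSubalgebra_of_mem_restrictSupport (t : k) {l : ℕ}
    {p : MvPolynomial (Fin 2) k} (hp : p ∈ restrictSupport k (balanced l)) :
    Ideal.Quotient.mk (nodeIdeal t) p ∈ powersSubalgebra t l := by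
  have hle : restrictSupport k (balanced l) ≤
      (Subalgebra.toSubmodule (powersSubalgebra t l)).comap
        (Ideal.Quotient.mkₐ k _).toLinearMap := by
    rw [restrictSupport_eq_span, Submodule.span_le]
    rintro _ ⟨d, hd, rfl⟩
    exact mk_monomial_mem_powersSubalgebra t hd
  exact hle hp

theorem mk_mem_powersSubalgebra_of_forall_mk_σ_eq (t : k) {l : ℕ} (hl : 0 < l) {ζ : k}
    (hζ : IsPrimitiveRoot ζ l) {p : MvPolynomial (Fin 2) k}
    (hinv : ∀ i, Ideal.Quotient.mk (nodeIdeal t) (stmt3.σ (ζ ^ i) p) = Ideal.Quotient.mk _ p) :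
    Ideal.Quotient.mk (nodeIdeal t) p ∈ powersSubalgebra t l := by
  have hl' : (l : k) ≠ 0 := by
    have : NeZero l := ⟨hl.ne'⟩
    exact hζ.neZero'.out
  have havg : Ideal.Quotient.mk (nodeIdeal t) (∑ i ∈ Finset.range l, stmt3.σ (ζ ^ i) p)
      = (l : k) • Ideal.Quotient.mk _ p := by
    rw [map_sum, Finset.sum_congr rfl fun i _ => hinv i, Finset.sum_const, Finset.card_range,
      Nat.cast_smul_eq_nsmul]
  have hmem := mk_mem_powersSubalgebra_of_mem_restrictSupport t
    (sum_σ_pow_mem_restrictSupport_balanced hl hζ p)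
  rw [havg] at hmem
  simpa [hl'] using Subalgebra.smul_mem _ hmem (l : k)⁻¹

noncomputable def powersHom (t : k) (l : ℕ) :
    MvPolynomial (Fin 2) k →ₐ[k] MvPolynomial (Fin 2) k ⧸ nodeIdeal t :=
  (Ideal.Quotient.mkₐ k _).comp (expand l)

theorem range_powersHom (t : k) (l : ℕ) : (powersHom t l).range = powersSubalgebra t l := by
  have hφ : powersHom t l = aeval fun i => Ideal.Quotient.mk (nodeIdeal t) (X i ^ l) := by
    ext i
    simp [powersHom]
  rw [hφ, ← Algebra.adjoin_range_eq_range_aeval, powersSubalgebra]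
  congr 1
  ext x
  simp [Fin.exists_fin_two, eq_comm]

theorem ker_powersHom (t : k) {l : ℕ} (hl : 0 < l) :
    RingHom.ker (powersHom t l) = nodeIdeal (t ^ l) := by
  have hle : nodeIdeal (t ^ l) ≤ RingHom.ker (powersHom t l) := by
    rw [Ideal.span_le, Set.singleton_subset_iff, SetLike.mem_coe, RingHom.mem_ker, powersHom,
      AlgHom.comp_apply, Ideal.Quotient.mkₐ_eq_mk, Ideal.Quotient.eq_zero_iff_mem,
      map_sub, map_mul, expand_X, expand_X, expand_C, ← mul_pow, C_pow]
    exact Ideal.mem_span_singleton.mpr (sub_dvd_pow_sub_pow _ _ _)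
  refine le_antisymm (fun q hq => ?_) hle
  obtain ⟨r, hr, hqr⟩ := exists_mem_restrictSupport_unmixed_sub_mem_nodeIdeal (t ^ l) q
  have hr0 : powersHom t l r = 0 := by
    simpa [RingHom.mem_ker.mp hq] using RingHom.mem_ker.mp (hle hqr)
  rw [powersHom, AlgHom.comp_apply, Ideal.Quotient.mkₐ_eq_mk,
    Ideal.Quotient.eq_zero_iff_mem] at hr0
  have hexp := eq_zero_of_mem_nodeIdeal_of_mem_restrictSupport_unmixed hr0
    (expand_mem_restrictSupport (by simp [unmixed]; tauto) hr)
  rw [expand_eq_zero hl] at hexp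
  rwa [hexp, sub_zero] at hqr

noncomputable def powersSubalgebraEquiv (t : k) {l : ℕ} (hl : 0 < l) :
    powersSubalgebra t l ≃ₐ[k] MvPolynomial (Fin 2) k ⧸ nodeIdeal (t ^ l) :=
  (Subalgebra.equivOfEq _ _ (range_powersHom t l).symm).trans <|
    (Ideal.quotientKerEquivRange _).symm.trans
      (Ideal.quotientEquivAlgOfEq k (ker_powersHom t hl))

end NodeQuotient

open NodeQuotient in
/-- let `μ_l` act on `A = k[z,w]/(zw - t)` by `(z,w) ↦ (ζ z, ζ⁻¹ w)`
(presented on representatives via `stmt3.σ`; the action preserves the ideal `(zw-t)`,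
so an element of `A` is invariant iff all of its representatives map into its class).
The invariant subring `A^{μ_l}` is the subalgebra generated by `x = z^l` and `y = w^l`,
and is isomorphic as a `k`-algebra to `k[x,y]/(xy - t^l)`. -/
theorem stmt3 (k : Type*) [Field k] (l : ℕ) (hl : 0 < l) (ζ : k)
    (hζ : IsPrimitiveRoot ζ l) (t : k) :
    letI P := MvPolynomial (Fin 2) k
    letI I : Ideal P := Ideal.span {(X 0 * X 1 - C t : P)}
    letI A := P ⧸ I
    letI mk : P →+* A := Ideal.Quotient.mk I
    letI S : Subalgebra k A := Algebra.adjoin k {mk (X 0 ^ l), mk (X 1 ^ l)}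
    {a : A | ∀ ξ : k, ξ ^ l = 1 → ∀ p : P, mk p = a → mk (stmt3.σ ξ p) = a}
        = (S : Set A) ∧
      Nonempty (S ≃ₐ[k] (MvPolynomial (Fin 2) k ⧸
        Ideal.span {(X 0 * X 1 - C (t ^ l) : MvPolynomial (Fin 2) k)})) := by
  refine ⟨Set.Subset.antisymm ?_ ?_, ⟨powersSubalgebraEquiv t hl⟩⟩
  · intro a ha
    obtain ⟨p, rfl⟩ := Ideal.Quotient.mk_surjective a
    refine mk_mem_powersSubalgebra_of_forall_mk_σ_eq t hl hζ fun i => ha _ ?_ p rfl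
    rw [← pow_mul, mul_comm, pow_mul, hζ.pow_eq_one, one_pow]
  · rintro _ ha ξ hξ p rfl
    exact mk_σ_eq_self_of_mem_powersSubalgebra t hl hξ ha
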